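/- Let G be a non-abelian finite n-centralizer semi-extraspecial p-group for a prime p. Then p divides n−2 and |G/Z(G)| ≤ (n−2)². -/

import Mathlib

/-- The set of element centralizers of a group `G`. -/
def centSet (G : Type*) [Group G] : Set (Subgroup G) :=
  Set.range fun x : G => Subgroup.centralizer {x}

/-- A finite `p`-group is extraspecial if its commutator subgroup equals its center and the
center has order `p`. -/
def IsExtraspecial (p : ℕ) (G : Type*) [Group G] : Prop :=
  Finite G ∧ IsPGroup p G ∧ commutator G = Subgroup.center G ∧
    Nat.card (Subgroup.center G) = p

/-- A finite `p`-group is semi-extraspecial if for every maximal subgroup `N` of the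
center `Z(G)`, the quotient `G/N` is extraspecial. -/
def IsSemiExtraspecial (p : ℕ) (G : Type*) [Group G] : Prop :=
  Finite G ∧ IsPGroup p G ∧
    ∀ (N : Subgroup G) (hN : N.Normal), N < Subgroup.center G →
      (∀ K : Subgroup G, N < K → K ≤ Subgroup.center G → K = Subgroup.center G) →
      letI := hN
      IsExtraspecial p (G ⧸ N)

/-!
For every maximal subgroup `N` of `Z(G)`, the center of the extraspecial group `G/N` has order `p`,
so it is `Z(G)/N`. Hence `G' ≤ Z(G)`, and commutation with a noncentral `x` is a homomorphism
`G → Z(G)` with kernel `C(x)`; it is onto, since otherwise its image lies in some such `N` and `x`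
would be central modulo `N`. So all noncentral centralizers have index `|Z(G)|`, and none
properly contains another.

In such a group the noncentral elements with centralizer `C` are exactly those of `C_G(C) \ Z(G)`,
so the `r = n - 1` subgroups `C_G(C)` cover `G` and pairwise meet in `Z(G)`; this gives
`|G : Z| - 1 = ∑_C (|C_G(C) : Z| - 1)`. For `v ∉ C`, the map `u ↦ C(vu)` sends `C_G(C)` to the
other `r - 1` centralizers and is injective modulo `Z(G)`, so `|C_G(C) : Z| ≤ r - 1`. In a
`p`-group every index here is a nontrivial power of `p`, hence `p ∣ r - 1 = n - 2`, and
`|G : Z| ≤ 1 + r (r - 2) = (r - 1)²`.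
-/

open Subgroup Finset
open scoped commutatorElement

section

variable {G : Type*} [Group G]

theorem mem_centralizer_centralizer_singleton (g : G) :
    g ∈ centralizer (centralizer {g} : Set G) :=
  mem_centralizer_iff.mpr fun _ hk => mem_centralizer_singleton_iff.mp hk

theorem centralizer_centralizer_singleton_le (g : G) :
    centralizer (centralizer {g} : Set G) ≤ centralizer {g} :=
  centralizer_le <| Set.singleton_subset_iff.mpr <| mem_centralizer_singleton_iff.mpr rfl

theorem centralizer_singleton_eq_top_iff {g : G} : centralizer {g} = ⊤ ↔ g ∈ center G := by
  rw [centralizer_eq_top_iff_subset, Set.singleton_subset_iff, SetLike.mem_coe]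

theorem Subgroup.normal_of_le_center {N : Subgroup G} (h : N ≤ center G) : N.Normal :=
  ⟨fun n hn g => by rwa [(mem_center_iff.mp (h hn) g), mul_inv_cancel_right]⟩

theorem Subgroup.card_mul_relIndex {H K : Subgroup G} (h : H ≤ K) :
    Nat.card H * H.relIndex K = Nat.card K := by
  rw [← relIndex_bot_left, ← relIndex_bot_left, relIndex_mul_relIndex _ _ _ bot_le h]

theorem Finset.card_le_card_of_forall_inv_mul_mem {s : Finset G} {H : Subgroup G} [Finite H]
    (h : ∀ a ∈ s, ∀ b ∈ s, a⁻¹ * b ∈ H) : #s ≤ Nat.card H := by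
  classical
  obtain rfl | ⟨a, ha⟩ := s.eq_empty_or_nonempty
  · simp
  calc #s = #(s.image (a⁻¹ * ·)) := (card_image_of_injective _ (mul_right_injective _)).symm
    _ = (↑(s.image (a⁻¹ * ·)) : Set G).ncard := (Set.ncard_coe_finset _).symm
    _ ≤ (H : Set G).ncard := by
      refine Set.ncard_le_ncard ?_ (Set.toFinite _)
      intro x hx
      obtain ⟨b, hb, rfl⟩ := mem_image.mp hx
      exact h a ha b hb
    _ = Nat.card H := Nat.card_coe_set_eq _ |>.symm

theorem IsPGroup.dvd_relIndex_of_not_le [Finite G] {p : ℕ} [Fact p.Prime] (hG : IsPGroup p G)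
    {H K : Subgroup G} (h : ¬K ≤ H) : p ∣ H.relIndex K := by
  obtain ⟨k, hk⟩ := (hG.to_subgroup K).index (H.subgroupOf K)
  have hk0 : k ≠ 0 := by
    rintro rfl
    exact h (relIndex_eq_one.mp hk)
  rw [relIndex, hk]
  exact dvd_pow_self p hk0

section Noncentral

variable (G) [Fintype G]

noncomputable def noncentralCentralizers : Finset (Subgroup G) := by
  classical exact (univ.filter (· ∉ center G)).image fun g => centralizer {g}

variable {G}

theorem mem_noncentralCentralizers {C : Subgroup G} :
    C ∈ noncentralCentralizers G ↔ ∃ g ∉ center G, centralizer {g} = C := by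
  classical simp [noncentralCentralizers]

theorem ncard_centSet : (centSet G).ncard = #(noncentralCentralizers G) + 1 := by
  have hcent : centSet G = insert ⊤ ↑(noncentralCentralizers G) := by
    ext C
    simp only [centSet, Set.mem_range, Set.mem_insert_iff, mem_coe, mem_noncentralCentralizers]
    constructor
    · rintro ⟨g, rfl⟩
      by_cases hg : g ∈ center G
      · exact Or.inl (centralizer_singleton_eq_top_iff.mpr hg)
      · exact Or.inr ⟨g, hg, rfl⟩
    · rintro (rfl | ⟨g, -, rfl⟩)
      · exact ⟨1, centralizer_singleton_eq_top_iff.mpr (one_mem _)⟩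
      · exact ⟨g, rfl⟩
  have htop : ⊤ ∉ (noncentralCentralizers G : Set (Subgroup G)) := by
    intro h
    obtain ⟨g, hg, h⟩ := mem_noncentralCentralizers.mp h
    exact hg (centralizer_singleton_eq_top_iff.mp h)
  rw [hcent, Set.ncard_insert_of_notMem htop, Set.ncard_coe_finset]

theorem one_le_card_noncentralCentralizers (h : center G ≠ ⊤) :
    1 ≤ #(noncentralCentralizers G) := by
  obtain ⟨g, -, hg⟩ := SetLike.exists_of_lt (lt_top_iff_ne_top.mpr h)
  exact card_pos.mpr ⟨_, mem_noncentralCentralizers.mpr ⟨g, hg, rfl⟩⟩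

end Noncentral

/-- The F-groups of Rebmann. -/
def IsFGroup (G : Type*) [Group G] : Prop :=
  ∀ x y : G, x ∉ center G → y ∉ center G →
    centralizer {x} ≤ centralizer {y} → centralizer {x} = centralizer {y}

namespace IsFGroup

theorem of_index_centralizer_eq [Finite G] {k : ℕ}
    (h : ∀ x ∉ center G, (centralizer {x}).index = k) : IsFGroup G := by
  intro x y hx hy hle
  have hrel := relIndex_mul_index hle
  rw [h x hx, h y hy] at hrel
  have hk : k ≠ 0 := h x hx ▸ index_ne_zero_of_finite
  exact le_antisymm hle (relIndex_eq_one.mp ((Nat.mul_eq_right hk).mp hrel))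

theorem centralizer_eq_of_mem_centralizer (hF : IsFGroup G) {x g : G} (hx : x ∉ center G)
    (hg : g ∉ center G) (hgx : g ∈ centralizer (centralizer {x} : Set G)) :
    centralizer {g} = centralizer {x} :=
  (hF x g hx hg fun _ hk =>
    mem_centralizer_singleton_iff.mpr (mem_centralizer_iff.mp hgx _ hk)).symm

theorem mem_center_of_mem_centralizer_of_mem_centralizer (hF : IsFGroup G) {x y g : G}
    (hx : x ∉ center G) (hy : y ∉ center G) (hxy : centralizer {x} ≠ centralizer {y})
    (hgx : g ∈ centralizer (centralizer {x} : Set G))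
    (hgy : g ∈ centralizer (centralizer {y} : Set G)) : g ∈ center G := by
  by_contra hg
  exact hxy <| (hF.centralizer_eq_of_mem_centralizer hx hg hgx).symm.trans
    (hF.centralizer_eq_of_mem_centralizer hy hg hgy)

theorem inv_mul_mem_center_of_centralizer_mul_eq (hF : IsFGroup G) {x v a b : G}
    (hx : x ∉ center G) (hva : v * a ∉ center G) (hne : centralizer {v * a} ≠ centralizer {x})
    (ha : a ∈ centralizer (centralizer {x} : Set G))
    (hb : b ∈ centralizer (centralizer {x} : Set G))
    (hab : centralizer {v * a} = centralizer {v * b}) : a⁻¹ * b ∈ center G := by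
  have hvab : (v * a)⁻¹ * (v * b) ∈ centralizer (centralizer {v * a} : Set G) := by
    refine mul_mem (inv_mem (mem_centralizer_centralizer_singleton _)) ?_
    rw [hab]
    exact mem_centralizer_centralizer_singleton _
  rw [mul_inv_rev, mul_assoc, inv_mul_cancel_left] at hvab
  exact hF.mem_center_of_mem_centralizer_of_mem_centralizer hx hva hne.symm
    (mul_mem (inv_mem ha) hb) hvab

variable [Fintype G]

open scoped Classical in
theorem card_centralizer_centralizer (hF : IsFGroup G) {x : G} (hx : x ∉ center G) :
    #{g | g ∉ center G ∧ centralizer {g} = centralizer {x}} + Nat.card (center G) =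
      Nat.card (centralizer (centralizer {x} : Set G)) := by
  set U := centralizer (centralizer {x} : Set G)
  have hfiber : #{g | g ∉ center G ∧ centralizer {g} = centralizer {x}} =
      #{g | g ∈ U ∧ g ∉ center G} := by
    refine congrArg card (filter_congr fun g _ => ?_)
    constructor
    · rintro ⟨hg, hgx⟩
      exact ⟨by simpa only [U, ← hgx] using mem_centralizer_centralizer_singleton g, hg⟩
    · rintro ⟨hgU, hg⟩
      exact ⟨hg, hF.centralizer_eq_of_mem_centralizer hx hg hgU⟩
  have hcenter : #{g | g ∈ U ∧ g ∈ center G} = #{g | g ∈ center G} :=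
    congrArg card (filter_congr fun g _ => and_iff_right_of_imp (center_le_centralizer _ ·))
  rw [hfiber, Nat.card_eq_fintype_card, Fintype.card_subtype, Nat.card_eq_fintype_card,
    Fintype.card_subtype, ← hcenter, ← filter_filter, ← filter_filter, add_comm,
    card_filter_add_card_filter_not]

theorem index_center_add_card_noncentralCentralizers (hF : IsFGroup G) :
    (center G).index + #(noncentralCentralizers G) =
      1 + ∑ C ∈ noncentralCentralizers G, (center G).relIndex (centralizer (C : Set G)) := by
  classical
  set P := noncentralCentralizers G
  have hfibers : #{g | g ∉ center G} =
      ∑ C ∈ P, #{g | g ∉ center G ∧ centralizer {g} = C} := by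
    rw [card_eq_sum_card_fiberwise (f := fun g => centralizer {g}) (t := P)]
    · simp only [filter_filter]
    · intro g hg
      exact mem_noncentralCentralizers.mpr ⟨g, (mem_filter.mp hg).2, rfl⟩
  have hcompl : #{g | g ∉ center G} + Nat.card (center G) = Nat.card G := by
    rw [Nat.card_eq_fintype_card, Fintype.card_subtype, Nat.card_eq_fintype_card, add_comm,
      card_filter_add_card_filter_not, card_univ]
  have hcard : ∀ C ∈ P, Nat.card (center G) * (center G).relIndex (centralizer (C : Set G)) =
      #{g | g ∉ center G ∧ centralizer {g} = C} + Nat.card (center G) := by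
    intro C hC
    obtain ⟨x, hx, rfl⟩ := mem_noncentralCentralizers.mp hC
    rw [card_mul_relIndex (center_le_centralizer _), card_centralizer_centralizer hF hx]
  apply Nat.eq_of_mul_eq_mul_left (Nat.card_pos (α := center G))
  rw [mul_add, card_mul_index, mul_add, mul_sum, sum_congr rfl hcard, sum_add_distrib,
    ← hfibers, sum_const, smul_eq_mul, ← hcompl]
  ring

theorem relIndex_center_centralizer_lt (hF : IsFGroup G) {C : Subgroup G}
    (hC : C ∈ noncentralCentralizers G) :
    (center G).relIndex (centralizer (C : Set G)) < #(noncentralCentralizers G) := by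
  classical
  obtain ⟨x, hx, rfl⟩ := mem_noncentralCentralizers.mp hC
  set U := centralizer (centralizer {x} : Set G)
  obtain ⟨v, -, hv⟩ := SetLike.exists_of_lt <| lt_top_iff_ne_top.mpr <|
    mt centralizer_singleton_eq_top_iff.mp hx
  have hvU : ∀ u ∈ U, v * u ∉ U := fun u hu h =>
    hv (centralizer_centralizer_singleton_le x (by simpa using mul_mem h (inv_mem hu)))
  have hvu_center : ∀ u ∈ U, v * u ∉ center G := fun u hu h =>
    hvU u hu (center_le_centralizer _ h)
  have hvu_ne : ∀ u ∈ U, centralizer {v * u} ≠ centralizer {x} := fun u hu h =>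
    hvU u hu (by simpa only [U, ← h] using mem_centralizer_centralizer_singleton (v * u))
  have hmaps : ∀ u ∈ ({g | g ∈ U} : Finset G),
      centralizer {v * u} ∈ (noncentralCentralizers G).erase (centralizer {x}) := by
    intro u hu
    have hu : u ∈ U := (mem_filter.mp hu).2
    refine mem_erase.mpr ⟨hvu_ne u hu, ?_⟩
    exact mem_noncentralCentralizers.mpr ⟨_, hvu_center u hu, rfl⟩
  have hfibers : ∀ D ∈ (noncentralCentralizers G).erase (centralizer {x}),
      #{u ∈ ({g | g ∈ U} : Finset G) | centralizer {v * u} = D} ≤ Nat.card (center G) := by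
    intro D _
    refine card_le_card_of_forall_inv_mul_mem fun a ha b hb => ?_
    simp only [mem_filter, mem_univ, true_and] at ha hb
    exact hF.inv_mul_mem_center_of_centralizer_mul_eq hx (hvu_center a ha.1) (hvu_ne a ha.1)
      ha.1 hb.1 (ha.2.trans hb.2.symm)
  have hcard := card_le_mul_card_image_of_maps_to hmaps _ hfibers
  rw [← Fintype.card_subtype, ← Nat.card_eq_fintype_card,
    ← card_mul_relIndex (center_le_centralizer _), card_erase_of_mem hC] at hcard
  exact (Nat.le_of_mul_le_mul_left hcard Nat.card_pos).trans_lt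
    (Nat.sub_lt (card_pos.mpr ⟨_, hC⟩) Nat.one_pos)

theorem index_center_le (hF : IsFGroup G) (hG : center G ≠ ⊤) :
    (center G).index ≤ (#(noncentralCentralizers G) - 1) ^ 2 := by
  have hsum := hF.index_center_add_card_noncentralCentralizers
  have hle : ∑ C ∈ noncentralCentralizers G, (center G).relIndex (centralizer (C : Set G)) ≤
      ∑ _C ∈ noncentralCentralizers G, (#(noncentralCentralizers G) - 1) :=
    sum_le_sum fun C hC => Nat.le_sub_one_of_lt (hF.relIndex_center_centralizer_lt hC)
  rw [sum_const, smul_eq_mul] at hle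
  obtain ⟨r, hr⟩ := Nat.exists_eq_add_of_le' (one_le_card_noncentralCentralizers hG)
  rw [hr, Nat.add_sub_cancel] at hle ⊢
  rw [hr] at hsum
  nlinarith

theorem prime_dvd_card_noncentralCentralizers_sub_one (hF : IsFGroup G) {p : ℕ} [Fact p.Prime]
    (hG : IsPGroup p G) (hZ : center G ≠ ⊤) : p ∣ #(noncentralCentralizers G) - 1 := by
  have hsum := hF.index_center_add_card_noncentralCentralizers
  have hP := one_le_card_noncentralCentralizers hZ
  have hindex : p ∣ (center G).index :=
    relIndex_top_right (center G) ▸ hG.dvd_relIndex_of_not_le (hZ ∘ top_le_iff.mp)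
  have hrel :
      p ∣ ∑ C ∈ noncentralCentralizers G, (center G).relIndex (centralizer (C : Set G)) := by
    refine dvd_sum fun C hC => hG.dvd_relIndex_of_not_le ?_
    obtain ⟨x, hx, rfl⟩ := mem_noncentralCentralizers.mp hC
    exact fun h => hx (h (mem_centralizer_centralizer_singleton x))
  have hsum' : (center G).index + (#(noncentralCentralizers G) - 1) =
      ∑ C ∈ noncentralCentralizers G, (center G).relIndex (centralizer (C : Set G)) := by
    omega
  exact (Nat.dvd_add_right hindex).mp (hsum' ▸ hrel)

end IsFGroup

def commutatorElementHom (x : G) (hx : ∀ g, ⁅x, g⁆ ∈ center G) : G →* G where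
  toFun g := ⁅x, g⁆
  map_one' := commutatorElement_one_right x
  map_mul' a b := by
    rw [commutatorElement_mul_right_eq_mul_conj, mul_assoc _ a, mem_center_iff.mp (hx b) a,
      ← mul_assoc, mul_inv_cancel_right]

theorem ker_commutatorElementHom (x : G) (hx : ∀ g, ⁅x, g⁆ ∈ center G) :
    (commutatorElementHom x hx).ker = centralizer {x} := by
  ext g
  rw [MonoidHom.mem_ker, mem_centralizer_singleton_iff]
  exact commutatorElement_eq_one_iff_commute.trans eq_comm

namespace IsSemiExtraspecial

variable {p : ℕ}

theorem exists_extraspecial_quotient_of_lt_center (hp : p.Prime) (hse : IsSemiExtraspecial p G)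
    {I : Subgroup G} (hI : I < center G) :
    ∃ (N : Subgroup G) (_ : N.Normal), I ≤ N ∧ commutator (G ⧸ N) = center (G ⧸ N) ∧
      ∀ g : G, (g : G ⧸ N) ∈ center (G ⧸ N) → g ∈ center G := by
  have := hse.1
  obtain ⟨N, hIN, hN⟩ := (Set.toFinite {K : Subgroup G | K < center G}).exists_le_maximal hI
  have hNZ : N < center G := hN.prop
  have hmax : ∀ K, N < K → K ≤ center G → K = center G := fun K hNK hKZ =>
    hKZ.eq_of_not_lt fun hKZ' => hNK.not_ge (hN.le_of_ge hKZ' hNK.le)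
  have hNn := normal_of_le_center hNZ.le
  obtain ⟨-, -, hcomm, hcard⟩ := hse.2.2 N hNn hNZ hmax
  refine ⟨N, hNn, hIN, hcomm, fun g hg => ?_⟩
  have hle : (center G).map (QuotientGroup.mk' N) ≤ center (G ⧸ N) := by
    rintro _ ⟨z, hz, rfl⟩
    refine mem_center_iff.mpr fun q => ?_
    induction q using QuotientGroup.induction_on with
    | H g => exact congrArg (QuotientGroup.mk' N) (mem_center_iff.mp hz g)
  have hne : (center G).map (QuotientGroup.mk' N) ≠ ⊥ := by
    rw [Ne, Subgroup.map_eq_bot_iff, QuotientGroup.ker_mk']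
    exact hNZ.not_ge
  have heq : (center G).map (QuotientGroup.mk' N) = center (G ⧸ N) := by
    refine eq_of_le_of_card_ge hle ?_
    have hdvd := hcard ▸ card_dvd_of_le hle
    rw [hcard, ((Nat.dvd_prime hp).mp hdvd).resolve_left (mt card_eq_one.mp hne)]
  rwa [← heq, ← QuotientGroup.mk'_apply, ← mem_comap, comap_map_eq, QuotientGroup.ker_mk',
    sup_of_le_left hNZ.le] at hg

theorem commutatorElement_mem_center (hp : p.Prime) (hse : IsSemiExtraspecial p G) (a b : G) :
    ⁅a, b⁆ ∈ center G := by
  have := hse.1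
  have := Fact.mk hp
  rcases subsingleton_or_nontrivial G with hG | hG
  · exact Subsingleton.elim (1 : G) ⁅a, b⁆ ▸ one_mem _
  have hZ : ⊥ < center G :=
    bot_lt_iff_ne_bot.mpr ((nontrivial_iff_ne_bot _).mp hse.2.1.center_nontrivial)
  obtain ⟨N, _, -, hcomm, hcenter⟩ := hse.exists_extraspecial_quotient_of_lt_center hp hZ
  refine hcenter _ ?_
  rw [← hcomm, ← QuotientGroup.mk'_apply, map_commutatorElement, _root_.commutator_def]
  exact commutator_mem_commutator (mem_top _) (mem_top _)

theorem index_centralizer_eq_card_center (hp : p.Prime) (hse : IsSemiExtraspecial p G) {x : G}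
    (hx : x ∉ center G) : (centralizer {x}).index = Nat.card (center G) := by
  have := hse.1
  set f := commutatorElementHom x (hse.commutatorElement_mem_center hp x)
  have hle : f.range ≤ center G := by
    rintro _ ⟨g, rfl⟩
    exact hse.commutatorElement_mem_center hp x g
  rw [← ker_commutatorElementHom x (hse.commutatorElement_mem_center hp x), index_ker]
  by_contra hne
  obtain ⟨N, _, hrange, -, hcenter⟩ :=
    hse.exists_extraspecial_quotient_of_lt_center hp (hle.lt_of_ne fun h => hne (by rw [h]))
  refine hx (hcenter x (mem_center_iff.mpr fun q => ?_))
  induction q using QuotientGroup.induction_on with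
  | H g =>
    have hxg : QuotientGroup.mk' N ⁅x, g⁆ = 1 :=
      (QuotientGroup.eq_one_iff _).mpr (hrange ⟨g, rfl⟩)
    rw [map_commutatorElement, commutatorElement_eq_one_iff_commute] at hxg
    exact hxg.eq.symm

theorem isFGroup (hp : p.Prime) (hse : IsSemiExtraspecial p G) : IsFGroup G :=
  have := hse.1
  IsFGroup.of_index_centralizer_eq fun _ hx => hse.index_centralizer_eq_card_center hp hx

end IsSemiExtraspecial

end

/-- A non-abelian finite `n`-centralizer semi-extraspecial `p`-group satisfies `p ∣ n - 2`
and `|G/Z(G)| ≤ (n-2)²`. -/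
theorem stmt12 (G : Type*) [Group G] [Finite G]
    (hG : ¬∀ a b : G, a * b = b * a) (n p : ℕ) (hp : p.Prime)
    (hse : IsSemiExtraspecial p G)
    (hcard : (centSet G).ncard = n) :
    p ∣ (n - 2) ∧ Nat.card (G ⧸ Subgroup.center G) ≤ (n - 2) ^ 2 := by
  have := Fact.mk hp
  have := Fintype.ofFinite G
  have hZ : center G ≠ ⊤ := fun h => hG fun a b => mem_center_iff.mp (h ▸ mem_top b) a
  have hF := hse.isFGroup hp
  have hn : n - 2 = #(noncentralCentralizers G) - 1 := by
    rw [← hcard, ncard_centSet]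
    omega
  rw [hn]
  exact ⟨hF.prime_dvd_card_noncentralCentralizers_sub_one hse.2.1 hZ, hF.index_center_le hZ⟩
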